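/- arXiv:1601.05061 — 5 statements merged into one kernel-verified Lean document; each statement's English description precedes it below -/
import Mathlib

section
/- Let x : ℝ → ℝ be a bounded, locally integrable function whose ergodic average ⟨x⟩ = lim_{T→∞} (1/T)∫₀ᵀ x(t) dt exists, and let w : [0,1] → ℝ be continuous with mean w̄ = ∫₀¹ w(s) ds. Then the infinitely-long windowed time average lim_{T→∞} (1/T)∫₀ᵀ w(t/T) x(t) dt exists and equals w̄ · ⟨x⟩. -/
open MeasureTheory Filter Set Topology

/-!
Substituting `t = T s` turns the windowed average into `∫₀¹ w(s) x(Ts) ds`, and the existence of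
`⟨x⟩` says exactly that `∫ₐᵇ x(Ts) ds → (b - a)⟨x⟩` for `0 ≤ a ≤ b`. The densities `x(T·)`, bounded
by `sup |x|`, therefore converge to `⟨x⟩` when tested against indicators of intervals. Uniform
continuity lets us replace `w` by a step function on a grid of mesh `1/N`, at a cost of
`ε · sup |x|` uniformly in `T`.
-/

theorem tendsto_of_forall_approx {ι β : Type*} [PseudoMetricSpace β] {l : Filter ι}
    {f : ι → β} {c : β}
    (h : ∀ ε > 0, ∃ g : ι → β, ∃ d, Tendsto g l (𝓝 d) ∧ dist d c ≤ ε ∧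
      ∀ᶠ i in l, dist (f i) (g i) ≤ ε) :
    Tendsto f l (𝓝 c) := by
  refine Metric.tendsto_nhds.mpr fun ε hε => ?_
  obtain ⟨g, d, hg, hdc, hfg⟩ := h (ε / 3) (by positivity)
  filter_upwards [hfg, Metric.tendsto_nhds.mp hg (ε / 3) (by positivity)] with i hfgi hgdi
  calc dist (f i) c ≤ dist (f i) (g i) + dist (g i) d + dist d c := dist_triangle4 _ _ _ _
    _ < ε := by linarith

theorem abs_integral_mul_sub_const_mul_le {w y : ℝ → ℝ} {a b c η B : ℝ} (hab : a ≤ b)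
    (hwy : IntervalIntegrable (fun s => w s * y s) volume a b)
    (hy : IntervalIntegrable y volume a b)
    (hw : ∀ s ∈ Icc a b, |w s - c| ≤ η) (hyB : ∀ s ∈ Icc a b, |y s| ≤ B) :
    |(∫ s in a..b, w s * y s) - c * ∫ s in a..b, y s| ≤ η * B * (b - a) := by
  have hsub : (∫ s in a..b, w s * y s) - c * ∫ s in a..b, y s
      = ∫ s in a..b, (w s - c) * y s := by
    simp_rw [sub_mul]
    rw [intervalIntegral.integral_sub hwy (hy.const_mul c), intervalIntegral.integral_const_mul]
  have hbound : ∀ s ∈ uIoc a b, ‖(w s - c) * y s‖ ≤ η * B := by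
    intro s hs
    rw [uIoc_of_le hab] at hs
    have hs := Ioc_subset_Icc_self hs
    rw [Real.norm_eq_abs, abs_mul]
    exact mul_le_mul (hw s hs) (hyB s hs) (abs_nonneg _) ((abs_nonneg _).trans (hw s hs))
  rw [hsub, ← abs_of_nonneg (sub_nonneg.mpr hab)]
  exact intervalIntegral.norm_integral_le_of_norm_le_const hbound

theorem Icc_div_natCast_subset_Icc_zero_one {N k : ℕ} (hk : k < N) :
    Icc ((k : ℝ) / N) ((k + 1) / N) ⊆ Icc 0 1 := by
  have hN : (0 : ℝ) < N := by exact_mod_cast (Nat.zero_le k).trans_lt hk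
  have hk' : (k : ℝ) + 1 ≤ N := by exact_mod_cast hk
  exact Icc_subset_Icc (by positivity) ((div_le_one hN).mpr hk')

theorem div_natCast_le_add_one_div (N k : ℕ) : (k : ℝ) / N ≤ (k + 1) / N := by
  gcongr; linarith

theorem IntervalIntegrable.on_Icc_div_natCast {f : ℝ → ℝ} (hf : IntervalIntegrable f volume 0 1)
    {N k : ℕ} (hk : k < N) : IntervalIntegrable f volume ((k : ℝ) / N) ((k + 1) / N) := by
  refine hf.mono_set ?_
  rw [uIcc_of_le (div_natCast_le_add_one_div N k), uIcc_of_le zero_le_one]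
  exact Icc_div_natCast_subset_Icc_zero_one hk

theorem sum_integral_div_natCast {f : ℝ → ℝ} (hf : IntervalIntegrable f volume 0 1)
    {N : ℕ} (hN : 0 < N) :
    ∑ k ∈ Finset.range N, ∫ s in (k / N : ℝ)..((k + 1) / N), f s = ∫ s in (0 : ℝ)..1, f s := by
  have := intervalIntegral.sum_integral_adjacent_intervals (a := fun k : ℕ => (k : ℝ) / N)
    (fun k hk => by simpa using hf.on_Icc_div_natCast hk)
  have hN' : (N : ℝ) ≠ 0 := by exact_mod_cast hN.ne'
  simpa [div_self hN'] using this

theorem abs_integral_mul_sub_sum_le {w y : ℝ → ℝ} {η B : ℝ} {N : ℕ} (hN : 0 < N)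
    (hw : ContinuousOn w (Icc 0 1))
    (hwN : ∀ s ∈ Icc (0 : ℝ) 1, ∀ t ∈ Icc (0 : ℝ) 1, |s - t| ≤ 1 / N → |w s - w t| ≤ η)
    (hy : IntervalIntegrable y volume 0 1) (hyB : ∀ s ∈ Icc (0 : ℝ) 1, |y s| ≤ B) :
    |(∫ s in (0 : ℝ)..1, w s * y s) -
        ∑ k ∈ Finset.range N, w (k / N) * ∫ s in (k / N : ℝ)..((k + 1) / N), y s| ≤ η * B := by
  have hwy : IntervalIntegrable (fun s => w s * y s) volume 0 1 :=
    hy.continuousOn_mul (by rwa [uIcc_of_le zero_le_one])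
  have hpiece : ∀ k ∈ Finset.range N,
      |(∫ s in (k / N : ℝ)..((k + 1) / N), w s * y s) -
          w (k / N) * ∫ s in (k / N : ℝ)..((k + 1) / N), y s| ≤ η * B * (1 / N) := by
    intro k hk
    have hk := Finset.mem_range.mp hk
    have hsub := Icc_div_natCast_subset_Icc_zero_one hk
    have hlen : ((k : ℝ) + 1) / N - k / N = 1 / N := by ring
    rw [← hlen]
    refine abs_integral_mul_sub_const_mul_le (div_natCast_le_add_one_div N k)
      (hwy.on_Icc_div_natCast hk) (hy.on_Icc_div_natCast hk) (fun s hs => ?_)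
      (fun s hs => hyB s (hsub hs))
    refine hwN s (hsub hs) _ (hsub (left_mem_Icc.mpr (div_natCast_le_add_one_div N k))) ?_
    rw [abs_of_nonneg (sub_nonneg.mpr hs.1), ← hlen]
    linarith [hs.2]
  have hN' : (N : ℝ) ≠ 0 := by exact_mod_cast hN.ne'
  calc _ = |∑ k ∈ Finset.range N, ((∫ s in (k / N : ℝ)..((k + 1) / N), w s * y s) -
          w (k / N) * ∫ s in (k / N : ℝ)..((k + 1) / N), y s)| := by
        rw [← sum_integral_div_natCast hwy hN, Finset.sum_sub_distrib]
    _ ≤ ∑ _k ∈ Finset.range N, η * B * (1 / N) :=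
        (Finset.abs_sum_le_sum_abs _ _).trans (Finset.sum_le_sum hpiece)
    _ = η * B := by
        rw [Finset.sum_const, Finset.card_range, nsmul_eq_mul]
        field_simp

theorem exists_nat_modulus_of_continuousOn {w : ℝ → ℝ} (hw : ContinuousOn w (Icc 0 1))
    {η : ℝ} (hη : 0 < η) :
    ∃ N : ℕ, 0 < N ∧
      ∀ s ∈ Icc (0 : ℝ) 1, ∀ t ∈ Icc (0 : ℝ) 1, |s - t| ≤ 1 / N → |w s - w t| ≤ η := by
  obtain ⟨δ, hδ, hwδ⟩ := Metric.uniformContinuousOn_iff_le.mp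
    (isCompact_Icc.uniformContinuousOn_of_continuous hw) η hη
  obtain ⟨m, hm⟩ := exists_nat_one_div_lt hδ
  refine ⟨m + 1, m.succ_pos, fun s hs t ht hst => hwδ s hs t ht ?_⟩
  push_cast at hst
  rw [Real.dist_eq]
  linarith

theorem tendsto_integral_mul_of_tendsto_integral {ι : Type*} {l : Filter ι} {y : ι → ℝ → ℝ}
    {w : ℝ → ℝ} {B L : ℝ} (hyB : ∀ i, ∀ s ∈ Icc (0 : ℝ) 1, |y i s| ≤ B)
    (hyint : ∀ i, IntervalIntegrable (y i) volume 0 1)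
    (hy : ∀ a b : ℝ, 0 ≤ a → a ≤ b → b ≤ 1 →
      Tendsto (fun i => ∫ s in a..b, y i s) l (𝓝 ((b - a) * L)))
    (hw : ContinuousOn w (Icc 0 1)) :
    Tendsto (fun i => ∫ s in (0 : ℝ)..1, w s * y i s) l (𝓝 ((∫ s in (0 : ℝ)..1, w s) * L)) := by
  refine tendsto_of_forall_approx fun ε hε => ?_
  have hM : 0 < |B| + |L| + 1 := by positivity
  set η := ε / (|B| + |L| + 1)
  have hη : 0 < η := div_pos hε hM
  have hηM : η * (|B| + |L| + 1) = ε := div_mul_cancel₀ ε hM.ne'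
  obtain ⟨N, hN, hwN⟩ := exists_nat_modulus_of_continuousOn hw hη
  -- The same estimate with `y ≡ L` compares the limit of the step sums with `(∫ w) * L`.
  have hlim := abs_integral_mul_sub_sum_le (y := fun _ => L) (B := |L|) hN hw hwN
    intervalIntegrable_const (fun _ _ => le_rfl)
  simp only [intervalIntegral.integral_mul_const, intervalIntegral.integral_const,
    smul_eq_mul] at hlim
  refine ⟨fun i => ∑ k ∈ Finset.range N, w (k / N) * ∫ s in (k / N : ℝ)..((k + 1) / N), y i s,
    ∑ k ∈ Finset.range N, w (k / N) * (((k + 1) / N - k / N) * L), ?_, ?_, ?_⟩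
  · refine tendsto_finsetSum _ fun k hk => ?_
    have hle := div_natCast_le_add_one_div N k
    have hsub := Icc_div_natCast_subset_Icc_zero_one (Finset.mem_range.mp hk)
    exact (hy _ _ (hsub (left_mem_Icc.mpr hle)).1 hle (hsub (right_mem_Icc.mpr hle)).2).const_mul _
  · rw [Real.dist_eq, abs_sub_comm]
    nlinarith [abs_nonneg B, abs_nonneg L]
  · refine Eventually.of_forall fun i => ?_
    rw [Real.dist_eq]
    have := abs_integral_mul_sub_sum_le hN hw hwN (hyint i) (hyB i)
    nlinarith [le_abs_self B, abs_nonneg L]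

theorem tendsto_average_mul_of_tendsto_average {x : ℝ → ℝ} {L : ℝ}
    (hx : Tendsto (fun T : ℝ => T⁻¹ * ∫ t in (0 : ℝ)..T, x t) atTop (𝓝 L)) {a : ℝ} (ha : 0 ≤ a) :
    Tendsto (fun T : ℝ => T⁻¹ * ∫ t in (0 : ℝ)..T * a, x t) atTop (𝓝 (a * L)) := by
  rcases ha.eq_or_lt with rfl | ha
  · simp
  refine ((hx.comp (tendsto_id.atTop_mul_const ha)).const_mul a).congr' ?_
  filter_upwards [eventually_ne_atTop 0] with T hT
  simp only [Function.comp_apply, id]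
  field_simp

theorem tendsto_integral_comp_mul_of_tendsto_average {x : ℝ → ℝ} {L : ℝ}
    (hint : ∀ u v, IntervalIntegrable x volume u v)
    (hx : Tendsto (fun T : ℝ => T⁻¹ * ∫ t in (0 : ℝ)..T, x t) atTop (𝓝 L))
    {a b : ℝ} (ha : 0 ≤ a) (hb : 0 ≤ b) :
    Tendsto (fun T => ∫ s in a..b, x (T * s)) atTop (𝓝 ((b - a) * L)) := by
  rw [sub_mul]
  refine ((tendsto_average_mul_of_tendsto_average hx hb).sub
    (tendsto_average_mul_of_tendsto_average hx ha)).congr' ?_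
  filter_upwards [eventually_ne_atTop 0] with T hT
  rw [intervalIntegral.integral_comp_mul_left _ hT, smul_eq_mul, ← mul_sub,
    intervalIntegral.integral_interval_sub_left (hint _ _) (hint _ _)]

/-- Lemma 2 (windowing lemma): if `x` is bounded, locally integrable, and its ergodic
average `⟨x⟩ = lim_{T→∞} (1/T)∫₀ᵀ x` exists (and equals `L`), and `w` is continuous on
`[0,1]` with mean `w̄ = ∫₀¹ w`, then the infinitely-long windowed time average
`lim_{T→∞} (1/T)∫₀ᵀ w(t/T) x(t) dt` exists and equals `w̄ · ⟨x⟩`. -/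
theorem windowed_average_eq_mean_mul_average
    (x w : ℝ → ℝ) (L : ℝ)
    (hxb : ∃ B : ℝ, ∀ t : ℝ, |x t| ≤ B)
    (hxloc : LocallyIntegrable x)
    (hx : Tendsto (fun T : ℝ => (1 / T) * ∫ t in (0:ℝ)..T, x t) atTop (nhds L))
    (hw : ContinuousOn w (Icc (0:ℝ) 1)) :
    Tendsto (fun T : ℝ => (1 / T) * ∫ t in (0:ℝ)..T, w (t / T) * x t) atTop
      (nhds ((∫ s in (0:ℝ)..1, w s) * L)) := by
  obtain ⟨B, hB⟩ := hxb
  have hint : ∀ u v, IntervalIntegrable x volume u v := fun u v =>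
    (hxloc.integrableOn_isCompact isCompact_uIcc).intervalIntegrable
  have hxT : ∀ T, IntervalIntegrable (fun s => x (T * s)) volume 0 1 := by
    intro T
    rcases eq_or_ne T 0 with rfl | hT
    · simp
    · simpa [hT] using (hint 0 T).comp_mul_left (c := T)
  simp only [one_div] at hx ⊢
  refine (tendsto_integral_mul_of_tendsto_integral (y := fun T s => x (T * s))
    (fun _ _ _ => hB _) hxT (fun a b ha hab _ => tendsto_integral_comp_mul_of_tendsto_average
      hint hx ha (ha.trans hab)) hw).congr' ?_
  filter_upwards [eventually_ne_atTop 0] with T hT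
  have hsubst :=
    intervalIntegral.integral_comp_mul_left (fun t => w (t / T) * x t) hT (a := 0) (b := 1)
  simpa [mul_div_cancel_left₀ _ hT] using hsubst
end

section
/- Let η : ℝ → ℝ be bounded and locally integrable, and suppose its ergodic average ⟨η⟩ = lim_{T→∞} (1/T)∫₀ᵀ η(τ) dτ exists. Then lim_{T→∞} sup_{τ̌, t ∈ [0,T]} | (1/T)∫_{τ̌}^{t} η(τ) dτ − ⟨η⟩·(t − τ̌)/T | = 0; that is, the supremum over all pairs τ̌, t in [0,T] of the deviation of the scaled partial integral (1/T)∫_{τ̌}^{t} η from the linear approximation ⟨η⟩(t − τ̌)/T tends to zero as T → ∞. -/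
open MeasureTheory Filter Set Topology Asymptotics

/-!
Write `F u = ∫₀ᵘ η - L u`. The existence of the ergodic average says `F u = o(u)`, and `F` is
continuous, hence bounded on any fixed `[0, T₀]`; together these give `sup_{[0,T]} |F| = o(T)`.
The quantity under the supremum is `(F t - F τ̌) / T`, so it is at most `2 sup_{[0,T]} |F| / T`.
-/

lemma isLittleO_sub_mul_id_of_tendsto_one_div_mul {f : ℝ → ℝ} {L : ℝ}
    (h : Tendsto (fun T => (1 / T) * f T) atTop (𝓝 L)) :
    (fun T => f T - L * T) =o[atTop] id := by
  rw [isLittleO_iff_tendsto' (g := id)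
    ((eventually_ne_atTop 0).mono fun T hT hT0 => absurd hT0 hT)]
  have hsub : Tendsto (fun T => (1 / T) * f T - L) atTop (𝓝 0) := by
    simpa using h.sub_const L
  refine hsub.congr' ?_
  filter_upwards [eventually_ne_atTop 0] with T hT
  simp only [id]
  field_simp

lemma eventually_forall_mem_Icc_norm_le_mul {E : Type*} [NormedAddCommGroup E] {f : ℝ → E}
    (hcont : Continuous f) (ho : f =o[atTop] id) {ε : ℝ} (hε : 0 < ε) :
    ∀ᶠ T in atTop, ∀ u ∈ Icc (0 : ℝ) T, ‖f u‖ ≤ ε * T := by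
  obtain ⟨T₀, hT₀⟩ := eventually_atTop.1 (ho.bound hε)
  obtain ⟨M, hM⟩ := (isCompact_Icc (a := 0) (b := T₀)).exists_bound_of_continuousOn
    hcont.continuousOn
  filter_upwards [(tendsto_id.const_mul_atTop hε).eventually_ge_atTop M] with T hMT u ⟨hu0, huT⟩
  rcases le_or_gt u T₀ with hu | hu
  · exact (hM u ⟨hu0, hu⟩).trans hMT
  · calc ‖f u‖ ≤ ε * ‖u‖ := hT₀ u hu.le
      _ = ε * u := by rw [Real.norm_of_nonneg hu0]
      _ ≤ ε * T := by gcongr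

lemma iSup_Icc_iSup_Icc_le {g : ℝ → ℝ → ℝ} {a b c : ℝ} (hc : 0 ≤ c)
    (h : ∀ s ∈ Icc a b, ∀ t ∈ Icc a b, g s t ≤ c) :
    ⨆ s ∈ Icc a b, ⨆ t ∈ Icc a b, g s t ≤ c :=
  Real.iSup_le (fun s => Real.iSup_le (fun hs => Real.iSup_le (fun t => Real.iSup_le
    (fun ht => h s hs t ht) hc) hc) hc) hc

lemma iSup_Icc_iSup_Icc_abs_nonneg (g : ℝ → ℝ → ℝ) (a b : ℝ) :
    0 ≤ ⨆ s ∈ Icc a b, ⨆ t ∈ Icc a b, |g s t| :=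
  Real.iSup_nonneg fun _ => Real.iSup_nonneg fun _ => Real.iSup_nonneg fun _ =>
    Real.iSup_nonneg fun _ => abs_nonneg _

theorem sup_scaled_partial_integral_sub_linear_tendsto_zero_general
    (η : ℝ → ℝ) (L : ℝ)
    (hηloc : LocallyIntegrable η)
    (hη : Tendsto (fun T : ℝ => (1 / T) * ∫ τ in (0:ℝ)..T, η τ) atTop (nhds L)) :
    Tendsto (fun T : ℝ =>
        ⨆ tau ∈ Icc (0:ℝ) T, ⨆ t ∈ Icc (0:ℝ) T,
          |(1 / T) * (∫ τ in tau..t, η τ) - L * ((t - tau) / T)|)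
      atTop (nhds 0) := by
  have hint : ∀ a b : ℝ, IntervalIntegrable η volume a b := fun a b =>
    (hηloc.integrableOn_isCompact isCompact_uIcc).intervalIntegrable
  set F : ℝ → ℝ := fun u => (∫ τ in (0:ℝ)..u, η τ) - L * u with hF
  have hFcont : Continuous F :=
    (intervalIntegral.continuous_primitive hint 0).sub (continuous_const_mul L)
  have hdev : ∀ T s t : ℝ, (1 / T) * (∫ τ in s..t, η τ) - L * ((t - s) / T) = (F t - F s) / T :=
    fun T s t => by
      rw [hF, ← intervalIntegral.integral_interval_sub_left (hint 0 t) (hint 0 s)]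
      ring
  refine Metric.tendsto_nhds.2 fun ε hε => ?_
  filter_upwards [eventually_forall_mem_Icc_norm_le_mul hFcont
    (isLittleO_sub_mul_id_of_tendsto_one_div_mul hη) (by positivity : 0 < ε / 4),
    eventually_gt_atTop 0] with T hFT hT
  have hsup : ⨆ s ∈ Icc (0:ℝ) T, ⨆ t ∈ Icc (0:ℝ) T,
      |(1 / T) * (∫ τ in s..t, η τ) - L * ((t - s) / T)| ≤ ε / 2 := by
    refine iSup_Icc_iSup_Icc_le (by positivity) fun s hs t ht => ?_
    rw [hdev, abs_div, abs_of_pos hT, div_le_iff₀ hT]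
    have := (abs_sub _ _).trans (add_le_add (hFT t ht) (hFT s hs))
    linarith
  rw [Real.dist_eq, sub_zero, abs_of_nonneg (iSup_Icc_iSup_Icc_abs_nonneg _ _ _)]
  linarith

/-- Lemma 3: if `η` is bounded, locally integrable, and its ergodic average
`⟨η⟩ = lim_{T→∞} (1/T)∫₀ᵀ η` exists (and equals `L`), then
`sup_{tau,t ∈ [0,T]} |(1/T)∫_{tau}^t η(τ) dτ − ⟨η⟩·(t−tau)/T| → 0` as `T → ∞`. -/
theorem sup_scaled_partial_integral_sub_linear_tendsto_zero
    (η : ℝ → ℝ) (L : ℝ)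
    (hηb : ∃ B : ℝ, ∀ t : ℝ, |η t| ≤ B)
    (hηloc : LocallyIntegrable η)
    (hη : Tendsto (fun T : ℝ => (1 / T) * ∫ τ in (0:ℝ)..T, η τ) atTop (nhds L)) :
    Tendsto (fun T : ℝ =>
        ⨆ tau ∈ Icc (0:ℝ) T, ⨆ t ∈ Icc (0:ℝ) T,
          |(1 / T) * (∫ τ in tau..t, η τ) - L * ((t - tau) / T)|)
      atTop (nhds 0) :=
  sup_scaled_partial_integral_sub_linear_tendsto_zero_general η L hηloc hη
end

section
/- Let η : ℝ → ℝ and J : ℝ → ℝ be bounded and locally integrable, and suppose the ergodic averages ⟨η⟩ = lim_{T→∞} (1/T)∫₀ᵀ η(t) dt and ⟨J⟩ = lim_{T→∞} (1/T)∫₀ᵀ J(t) dt both exist. Let w : [0,1] → ℝ be continuously differentiable with w(0) = w(1) = 0 and mean w̄ = ∫₀¹ w(s) ds, and let τ̌ : (0,∞) → ℝ satisfy 0 ≤ τ̌(T) ≤ T for all T and lim_{T→∞} τ̌(T)/T exists. Then lim_{T→∞} (1/T)∫₀ᵀ w'(t/T) · (1/T)(∫_{τ̌(T)}^{t} η(τ)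 dτ) · J(t) dt = −w̄ · ⟨η⟩ · ⟨J⟩. -/
open MeasureTheory Filter Set Topology

/-!
Write `F t = ∫₀ᵗ η`. Existence of `⟨η⟩` means `F t - ⟨η⟩ t = o(t)`, and as `F` is continuous this
holds uniformly on `[0, T]`: `F (T s) / T → ⟨η⟩ s` uniformly for `s ∈ [0, 1]`, hence, with
`τ̌(T)/T → c`, also `(1/T) ∫_{τ̌(T)}^{T s} η → ⟨η⟩ (s - c)` uniformly. Since `J` is bounded, this
factor may be replaced by its limit, leaving the windowed average `(1/T) ∫₀ᵀ g(t/T) J(t) dt` with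
`g s = w' s · ⟨η⟩ (s - c)`. For a `C¹` window `g` one integration by parts against the primitive
of `J` shows that it tends to `⟨J⟩ ∫₀¹ g`, and Weierstrass approximation extends this to
continuous `g`. Finally `∫₀¹ w' s (s - c) ds = -w̄` because `w` vanishes at both ends.
-/

def HasTimeAverage (f : ℝ → ℝ) (L : ℝ) : Prop :=
  Tendsto (fun T : ℝ => (1 / T) * ∫ t in (0:ℝ)..T, f t) atTop (𝓝 L)

theorem MeasureTheory.LocallyIntegrable.intervalIntegrable {f : ℝ → ℝ}
    (hf : LocallyIntegrable f) (a b : ℝ) : IntervalIntegrable f volume a b :=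
  (hf.integrableOn_isCompact isCompact_uIcc).intervalIntegrable

theorem div_mem_Icc_zero_one {t T : ℝ} (hT : 0 < T) (ht : t ∈ Icc 0 T) : t / T ∈ Icc (0:ℝ) 1 :=
  ⟨div_nonneg ht.1 hT.le, (div_le_one hT).2 ht.2⟩

theorem continuousOn_comp_div {h : ℝ → ℝ} (hh : ContinuousOn h (Icc 0 1)) {T : ℝ}
    (hT : 0 < T) : ContinuousOn (fun t => h (t / T)) (uIcc 0 T) :=
  hh.comp (continuousOn_id.div_const T) fun _ ht =>
    div_mem_Icc_zero_one hT (uIcc_of_le hT.le ▸ ht)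

theorem tendsto_of_forall_approx_s4 {α : Type*} {l : Filter α} {u : α → ℝ} {ℓ C : ℝ}
    (h : ∀ ε > 0, ∃ v : α → ℝ, ∃ m, |m - ℓ| ≤ C * ε ∧ Tendsto v l (𝓝 m) ∧
      ∀ᶠ x in l, |u x - v x| ≤ C * ε) :
    Tendsto u l (𝓝 ℓ) := by
  rw [Metric.tendsto_nhds]
  intro ε hε
  have hδ : 0 < ε / (3 * (|C| + 1)) := by positivity
  obtain ⟨v, m, hm, hv, huv⟩ := h _ hδ
  have hCδ : C * (ε / (3 * (|C| + 1))) < ε / 3 :=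
    calc C * (ε / (3 * (|C| + 1))) < (|C| + 1) * (ε / (3 * (|C| + 1))) := by
          gcongr; linarith [le_abs_self C]
      _ = ε / 3 := by field_simp
  filter_upwards [huv, Metric.tendsto_nhds.1 hv (ε / 3) (by positivity)] with x hux hvx
  rw [Real.dist_eq] at hvx ⊢
  linarith [abs_sub_le (u x) (v x) ℓ, abs_sub_le (v x) m ℓ]

theorem abs_average_le_of_forall_abs_le {φ : ℝ → ℝ} {T C : ℝ} (hT : 0 < T)
    (h : ∀ t ∈ Icc 0 T, |φ t| ≤ C) : |(1 / T) * ∫ t in (0:ℝ)..T, φ t| ≤ C := by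
  have hint := intervalIntegral.norm_integral_le_of_norm_le_const (a := 0) (b := T) (f := φ)
    fun t ht => h t (Ioc_subset_Icc_self (uIoc_of_le hT.le ▸ ht))
  rw [Real.norm_eq_abs, sub_zero, abs_of_pos hT] at hint
  rw [abs_mul, abs_of_pos (one_div_pos.2 hT)]
  calc 1 / T * |∫ t in (0:ℝ)..T, φ t| ≤ 1 / T * (C * T) := by gcongr
    _ = C := by field_simp

theorem average_comp_div {g : ℝ → ℝ} {T : ℝ} (hT : T ≠ 0) :
    (1 / T) * ∫ t in (0:ℝ)..T, g (t / T) = ∫ s in (0:ℝ)..1, g s := by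
  rw [intervalIntegral.integral_comp_div g hT, zero_div, div_self hT, smul_eq_mul]
  field_simp

theorem tendstoUniformlyOn_comp_mul_div_of_isLittleO {h : ℝ → ℝ} (hc : Continuous h)
    (ho : h =o[atTop] id) :
    TendstoUniformlyOn (fun T s => h (T * s) / T) 0 atTop (Icc 0 1) := by
  rw [Metric.tendstoUniformlyOn_iff]
  intro ε hε
  obtain ⟨t₁, ht₁⟩ := eventually_atTop.1 (ho.def (half_pos hε))
  obtain ⟨M, hM⟩ := isCompact_Icc.exists_bound_of_continuousOn (hc.continuousOn (s := Icc 0 t₁))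
  filter_upwards [eventually_gt_atTop 0, eventually_gt_atTop (M / ε)] with T hT hTM
  intro s hs
  have hTs : 0 ≤ T * s := mul_nonneg hT.le hs.1
  have hbound : |h (T * s)| < ε * T := by
    rcases le_or_gt t₁ (T * s) with hbig | hsmall
    · have := ht₁ _ hbig
      rw [Real.norm_eq_abs, Real.norm_eq_abs, id, abs_of_nonneg hTs] at this
      calc |h (T * s)| ≤ ε / 2 * (T * s) := this
        _ ≤ ε / 2 * T := by gcongr; exact mul_le_of_le_one_right hT.le hs.2
        _ < ε * T := by linarith [mul_pos hε hT]
    · have := hM _ ⟨hTs, hsmall.le⟩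
      rw [Real.norm_eq_abs] at this
      rw [div_lt_iff₀ hε] at hTM
      linarith
  rw [Pi.zero_apply, dist_zero_left, Real.norm_eq_abs, abs_div, abs_of_pos hT]
  exact (div_lt_iff₀ hT).2 hbound

namespace HasTimeAverage

variable {f : ℝ → ℝ} {L : ℝ}

theorem isLittleO (hf : HasTimeAverage f L) :
    (fun T => (∫ t in (0:ℝ)..T, f t) - L * T) =o[atTop] id := by
  rw [Asymptotics.isLittleO_iff_tendsto' (Eventually.of_forall fun T hT => by simp_all)]
  refine (tendsto_sub_nhds_zero_iff.2 hf).congr' ?_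
  filter_upwards [eventually_ne_atTop 0] with T hT
  simp only [id]
  field_simp

theorem tendstoUniformlyOn_primitive (hf : HasTimeAverage f L) (hloc : LocallyIntegrable f) :
    TendstoUniformlyOn (fun T s => (1 / T) * ∫ t in (0:ℝ)..T * s, f t) (fun s => L * s)
      atTop (Icc 0 1) := by
  have hc : Continuous fun T => (∫ t in (0:ℝ)..T, f t) - L * T :=
    (intervalIntegral.continuous_primitive hloc.intervalIntegrable 0).sub (by fun_prop)
  have hO := tendstoUniformlyOn_comp_mul_div_of_isLittleO hc hf.isLittleO
  rw [Metric.tendstoUniformlyOn_iff] at hO ⊢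
  intro ε hε
  filter_upwards [hO ε hε, eventually_ne_atTop 0] with T hT hT0 s hs
  convert hT s hs using 1
  rw [Real.dist_eq, Real.dist_eq, Pi.zero_apply, zero_sub, abs_neg, abs_sub_comm]
  congr 1
  field_simp

theorem tendstoUniformlyOn_integral_of_tendsto_div (hf : HasTimeAverage f L)
    (hloc : LocallyIntegrable f)
    {tau : ℝ → ℝ} {c : ℝ} (htau0 : ∀ T : ℝ, 0 < T → 0 ≤ tau T ∧ tau T ≤ T)
    (htau : Tendsto (fun T => tau T / T) atTop (𝓝 c)) :
    TendstoUniformlyOn (fun T s => (1 / T) * ∫ t in tau T..T * s, f t) (fun s => L * (s - c))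
      atTop (Icc 0 1) := by
  have hU := hf.tendstoUniformlyOn_primitive hloc
  have hc : Tendsto (fun T => tau T / T) atTop (𝓝[Icc 0 1] c) := by
    refine tendsto_nhdsWithin_iff.2 ⟨htau, ?_⟩
    filter_upwards [eventually_gt_atTop 0] with T hT
    exact div_mem_Icc_zero_one hT (htau0 T hT)
  have hτ := hU.tendsto_comp (by fun_prop : Continuous fun s : ℝ => L * s).continuousWithinAt hc
  refine ((hU.fun_sub (hτ.tendstoUniformlyOn_const _)).congr ?_).congr_right
    fun s _ => by ring
  filter_upwards [eventually_ne_atTop 0] with T hT s _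
  simp only [mul_div_cancel₀ _ hT]
  rw [← mul_sub, intervalIntegral.integral_interval_sub_left (hloc.intervalIntegrable _ _)
    (hloc.intervalIntegrable _ _)]

end HasTimeAverage

theorem tendsto_average_mul_of_tendstoUniformlyOn {K h p : ℝ → ℝ} {P : ℝ → ℝ → ℝ} {B ℓ : ℝ}
    (hKb : ∀ t, |K t| ≤ B) (hKloc : LocallyIntegrable K)
    (hh : ContinuousOn h (Icc 0 1)) (hp : ContinuousOn p (Icc 0 1))
    (hPc : ∀ T, Continuous (P T))
    (hP : TendstoUniformlyOn (fun T s => P T (T * s)) p atTop (Icc 0 1))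
    (hlim : Tendsto (fun T => (1 / T) * ∫ t in (0:ℝ)..T, h (t / T) * p (t / T) * K t)
      atTop (𝓝 ℓ)) :
    Tendsto (fun T => (1 / T) * ∫ t in (0:ℝ)..T, h (t / T) * P T t * K t) atTop (𝓝 ℓ) := by
  obtain ⟨M, hM⟩ := isCompact_Icc.exists_bound_of_continuousOn hh
  have hM0 : 0 ≤ M := (norm_nonneg _).trans (hM 0 ⟨le_rfl, zero_le_one⟩)
  have hB0 : 0 ≤ B := (abs_nonneg _).trans (hKb 0)
  refine tendsto_of_forall_approx_s4 (C := M * B) fun ε hε => ⟨_, ℓ, ?_, hlim, ?_⟩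
  · rw [sub_self, abs_zero]
    positivity
  filter_upwards [eventually_gt_atTop 0, Metric.tendstoUniformlyOn_iff.1 hP ε hε] with T hT hPT
  have hhT := continuousOn_comp_div hh hT
  have hint {Q : ℝ → ℝ} (hQ : ContinuousOn Q (uIcc 0 T)) :
      IntervalIntegrable (fun t => h (t / T) * Q t * K t) volume 0 T :=
    (hKloc.intervalIntegrable 0 T).continuousOn_mul (hhT.mul hQ)
  rw [← mul_sub, ← intervalIntegral.integral_sub (hint (hPc T).continuousOn)
    (hint (continuousOn_comp_div hp hT))]
  refine abs_average_le_of_forall_abs_le hT fun t ht => ?_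
  have hs := div_mem_Icc_zero_one hT ht
  have hPt := hPT _ hs
  have hht : |h (t / T)| ≤ M := hM _ hs
  rw [mul_div_cancel₀ _ hT.ne', Real.dist_eq, abs_sub_comm] at hPt
  calc |h (t / T) * P T t * K t - h (t / T) * p (t / T) * K t|
      = |h (t / T)| * |P T t - p (t / T)| * |K t| := by rw [← abs_mul, ← abs_mul]; ring_nf
    _ ≤ M * ε * B := by gcongr; exact hKb t
    _ = M * B * ε := by ring

theorem integral_mul_eq_sub_integral_deriv_mul_primitive {G K : ℝ → ℝ} (hG : ContDiff ℝ 1 G)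
    (hK : LocallyIntegrable K) (a b : ℝ) :
    ∫ t in a..b, G t * K t =
      G b * (∫ t in a..b, K t) - ∫ t in a..b, deriv G t * ∫ u in a..t, K u := by
  have hparts := AbsolutelyContinuousOnInterval.integral_mul_deriv_eq_deriv_mul
    hG.contDiffOn.absolutelyContinuousOnInterval
    ((hK.intervalIntegrable a b).absolutelyContinuousOnInterval_intervalIntegral left_mem_uIcc)
  rw [intervalIntegral.integral_same, mul_zero, sub_zero] at hparts
  rw [← hparts]
  refine intervalIntegral.integral_congr_ae ?_
  filter_upwards [LocallyIntegrable.ae_hasDerivAt_integral hK] with t ht _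
  rw [(ht a).deriv]

theorem integral_deriv_mul_id_eq_sub {g : ℝ → ℝ} (hg : ContDiff ℝ 1 g) :
    ∫ s in (0:ℝ)..1, deriv g s * s = g 1 - ∫ s in (0:ℝ)..1, g s := by
  have := intervalIntegral.integral_mul_deriv_eq_deriv_mul (u := id) (u' := fun _ => 1)
    (v := g) (a := 0) (b := 1) (fun x _ => hasDerivAt_id x)
    (fun x _ => (hg.differentiable one_ne_zero x).hasDerivAt) intervalIntegrable_const
    ((hg.continuous_deriv le_rfl).intervalIntegrable 0 1)
  simp only [id, one_mul, zero_mul, sub_zero] at this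
  rw [← this]
  exact intervalIntegral.integral_congr fun s _ => mul_comm _ _

theorem HasTimeAverage.tendsto_windowed_average_of_contDiff {K g : ℝ → ℝ} {L : ℝ}
    (hK : HasTimeAverage K L) (hKloc : LocallyIntegrable K) (hg : ContDiff ℝ 1 g) :
    Tendsto (fun T => (1 / T) * ∫ t in (0:ℝ)..T, g (t / T) * K t) atTop
      (𝓝 ((∫ s in (0:ℝ)..1, g s) * L)) := by
  -- The trailing `* 1` lets `tendsto_average_mul_of_tendstoUniformlyOn` be applied with `K = 1`.
  have hparts : ∀ᶠ T in atTop, g 1 * ((1 / T) * ∫ u in (0:ℝ)..T, K u)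
      - (1 / T) * ∫ t in (0:ℝ)..T, deriv g (t / T) * ((1 / T) * ∫ u in (0:ℝ)..t, K u) * 1
      = (1 / T) * ∫ t in (0:ℝ)..T, g (t / T) * K t := by
    filter_upwards [eventually_ne_atTop 0] with T hT
    have hderiv (t : ℝ) : deriv (fun t => g (t / T)) t = deriv g (t / T) / T :=
      (((hg.differentiable one_ne_zero) (t / T)).hasDerivAt.comp t
        ((hasDerivAt_id t).div_const T)).deriv.trans (by simp [div_eq_mul_inv])
    rw [integral_mul_eq_sub_integral_deriv_mul_primitive (G := fun t => g (t / T))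
      (hg.comp (contDiff_id.div_const T)) hKloc, div_self hT]
    have hscale : ∫ t in (0:ℝ)..T, deriv g (t / T) * ((1 / T) * ∫ u in (0:ℝ)..t, K u) * 1
        = ∫ t in (0:ℝ)..T, deriv (fun t => g (t / T)) t * ∫ u in (0:ℝ)..t, K u :=
      intervalIntegral.integral_congr fun t _ => by rw [hderiv]; ring
    rw [hscale]
    ring
  have hrem : Tendsto (fun T => (1 / T) *
        ∫ t in (0:ℝ)..T, deriv g (t / T) * ((1 / T) * ∫ u in (0:ℝ)..t, K u) * 1) atTop
      (𝓝 (∫ s in (0:ℝ)..1, deriv g s * (L * s) * 1)) := by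
    refine tendsto_average_mul_of_tendstoUniformlyOn (K := fun _ => 1) (B := 1)
      (fun _ => by simp) (locallyIntegrable_const 1)
      (hg.continuous_deriv le_rfl).continuousOn (by fun_prop)
      (fun T => continuous_const.mul
        (intervalIntegral.continuous_primitive hKloc.intervalIntegrable 0))
      (hK.tendstoUniformlyOn_primitive hKloc) (tendsto_const_nhds.congr' ?_)
    filter_upwards [eventually_ne_atTop 0] with T hT
    exact (average_comp_div (g := fun s => deriv g s * (L * s) * 1) hT).symm
  have hlimit : g 1 * L - ∫ s in (0:ℝ)..1, deriv g s * (L * s) * 1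
      = (∫ s in (0:ℝ)..1, g s) * L := by
    simp only [mul_one, mul_left_comm _ L, intervalIntegral.integral_const_mul,
      integral_deriv_mul_id_eq_sub hg]
    ring
  exact hlimit ▸ ((hK.const_mul (g 1)).sub hrem).congr' hparts

theorem HasTimeAverage.tendsto_windowed_average {K g : ℝ → ℝ} {B L : ℝ}
    (hK : HasTimeAverage K L) (hKb : ∀ t, |K t| ≤ B) (hKloc : LocallyIntegrable K)
    (hg : ContinuousOn g (Icc 0 1)) :
    Tendsto (fun T => (1 / T) * ∫ t in (0:ℝ)..T, g (t / T) * K t) atTop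
      (𝓝 ((∫ s in (0:ℝ)..1, g s) * L)) := by
  have hB0 : 0 ≤ B := (abs_nonneg _).trans (hKb 0)
  refine tendsto_of_forall_approx_s4 (C := B + |L|) fun ε hε => ?_
  obtain ⟨p, hp⟩ := exists_polynomial_near_of_continuousOn 0 1 g hg ε hε
  have hpc : ContDiff ℝ 1 fun s => p.eval s := by simpa using p.contDiff_aeval (𝕜 := ℝ) 1
  refine ⟨_, (∫ s in (0:ℝ)..1, p.eval s) * L, ?_,
    hK.tendsto_windowed_average_of_contDiff hKloc hpc, ?_⟩
  · have hint := intervalIntegral.norm_integral_le_of_norm_le_const (a := 0) (b := 1)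
      (f := fun s => p.eval s - g s) (C := ε)
      fun s hs => (hp s (Ioc_subset_Icc_self (uIoc_of_le (zero_le_one (α := ℝ)) ▸ hs))).le
    rw [Real.norm_eq_abs, sub_zero, abs_one, mul_one] at hint
    rw [← sub_mul, ← intervalIntegral.integral_sub (hpc.continuous.intervalIntegrable 0 1)
      (hg.intervalIntegrable_of_Icc zero_le_one), abs_mul]
    nlinarith [abs_nonneg L]
  · filter_upwards [eventually_gt_atTop 0] with T hT
    have hint {q : ℝ → ℝ} (hq : ContinuousOn q (Icc 0 1)) :
        IntervalIntegrable (fun t => q (t / T) * K t) volume 0 T :=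
      (hKloc.intervalIntegrable 0 T).continuousOn_mul (continuousOn_comp_div hq hT)
    rw [← mul_sub, ← intervalIntegral.integral_sub (hint hg) (hint hpc.continuous.continuousOn)]
    refine (abs_average_le_of_forall_abs_le (C := ε * B) hT fun t ht => ?_).trans
      (by nlinarith [abs_nonneg L])
    rw [← sub_mul, abs_mul, abs_sub_comm]
    exact mul_le_mul (hp _ (div_mem_Icc_zero_one hT ht)).le (hKb t) (abs_nonneg _) hε.le

theorem integral_deriv_mul_affine_eq {w w' : ℝ → ℝ}
    (hw : ∀ s ∈ Icc (0:ℝ) 1, HasDerivWithinAt w (w' s) (Icc (0:ℝ) 1) s)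
    (hw' : IntervalIntegrable w' volume 0 1) (hw0 : w 0 = 0) (hw1 : w 1 = 0) (a c : ℝ) :
    ∫ s in (0:ℝ)..1, w' s * (a * (s - c)) = -a * ∫ s in (0:ℝ)..1, w s := by
  have := intervalIntegral.integral_mul_deriv_eq_deriv_mul_of_hasDerivWithinAt
    (u := fun s => a * (s - c)) (u' := fun _ => a) (v := w) (a := 0) (b := 1)
    (fun x _ => (((hasDerivAt_id x).sub_const c).const_mul a).hasDerivWithinAt.congr_deriv
      (mul_one a)) (uIcc_of_le (zero_le_one (α := ℝ)) ▸ hw) intervalIntegrable_const hw'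
  rw [hw0, hw1, mul_zero, mul_zero, sub_zero, zero_sub, intervalIntegral.integral_const_mul]
    at this
  rw [neg_mul, ← this]
  exact intervalIntegral.integral_congr fun s _ => mul_comm _ _

theorem windowed_dilation_average_eq_neg_mean_mul_averages_general
    (η J w w' : ℝ → ℝ) (tau : ℝ → ℝ) (Lη LJ sc : ℝ)
    (hηloc : LocallyIntegrable η)
    (hη : Tendsto (fun T : ℝ => (1 / T) * ∫ t in (0:ℝ)..T, η t) atTop (nhds Lη))
    (hJb : ∃ B : ℝ, ∀ t : ℝ, |J t| ≤ B)
    (hJloc : LocallyIntegrable J)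
    (hJ : Tendsto (fun T : ℝ => (1 / T) * ∫ t in (0:ℝ)..T, J t) atTop (nhds LJ))
    (hw : ∀ s ∈ Icc (0:ℝ) 1, HasDerivWithinAt w (w' s) (Icc (0:ℝ) 1) s)
    (hw'c : ContinuousOn w' (Icc (0:ℝ) 1))
    (hw0 : w 0 = 0) (hw1 : w 1 = 0)
    (htau0 : ∀ T : ℝ, 0 < T → 0 ≤ tau T ∧ tau T ≤ T)
    (htau : Tendsto (fun T : ℝ => tau T / T) atTop (nhds sc)) :
    Tendsto (fun T : ℝ =>
        (1 / T) * ∫ t in (0:ℝ)..T,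
          w' (t / T) * ((1 / T) * ∫ τ in tau T..t, η τ) * J t)
      atTop (nhds (-(∫ s in (0:ℝ)..1, w s) * Lη * LJ)) := by
  obtain ⟨B, hB⟩ := hJb
  have hlin : ContinuousOn (fun s => Lη * (s - sc)) (Icc 0 1) := by fun_prop
  have hmean : (∫ s in (0:ℝ)..1, w' s * (Lη * (s - sc))) * LJ
      = -(∫ s in (0:ℝ)..1, w s) * Lη * LJ := by
    rw [integral_deriv_mul_affine_eq hw (hw'c.intervalIntegrable_of_Icc zero_le_one) hw0 hw1]
    ring
  rw [← hmean]
  refine tendsto_average_mul_of_tendstoUniformlyOn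
    (P := fun T t => (1 / T) * ∫ τ in tau T..t, η τ) hB hJloc hw'c hlin
    (fun T => continuous_const.mul
      (intervalIntegral.continuous_primitive hηloc.intervalIntegrable _))
    (HasTimeAverage.tendstoUniformlyOn_integral_of_tendsto_div hη hηloc htau0 htau) ?_
  exact HasTimeAverage.tendsto_windowed_average (g := fun s => w' s * (Lη * (s - sc)))
    hJ hB hJloc (hw'c.mul hlin)

/-- Equation (15) ('final'): for `η`, `J` bounded, locally integrable, with ergodic
averages `⟨η⟩ = Lη`, `⟨J⟩ = LJ`, `w` continuously differentiable on `[0,1]` with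
`w 0 = w 1 = 0` and mean `w̄ = ∫₀¹ w`, and `tau : (0,∞) → ℝ` with `0 ≤ tau T ≤ T` and
`lim_{T→∞} tau T / T` existing, one has
`lim_{T→∞} (1/T)∫₀ᵀ w'(t/T)·(1/T)(∫_{tau T}^t η)·J(t) dt = −w̄·⟨η⟩·⟨J⟩`. -/
theorem windowed_dilation_average_eq_neg_mean_mul_averages
    (η J w w' : ℝ → ℝ) (tau : ℝ → ℝ) (Lη LJ sc : ℝ)
    (hηb : ∃ B : ℝ, ∀ t : ℝ, |η t| ≤ B)
    (hηloc : LocallyIntegrable η)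
    (hη : Tendsto (fun T : ℝ => (1 / T) * ∫ t in (0:ℝ)..T, η t) atTop (nhds Lη))
    (hJb : ∃ B : ℝ, ∀ t : ℝ, |J t| ≤ B)
    (hJloc : LocallyIntegrable J)
    (hJ : Tendsto (fun T : ℝ => (1 / T) * ∫ t in (0:ℝ)..T, J t) atTop (nhds LJ))
    (hw : ∀ s ∈ Icc (0:ℝ) 1, HasDerivWithinAt w (w' s) (Icc (0:ℝ) 1) s)
    (hw'c : ContinuousOn w' (Icc (0:ℝ) 1))
    (hw0 : w 0 = 0) (hw1 : w 1 = 0)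
    (htau0 : ∀ T : ℝ, 0 < T → 0 ≤ tau T ∧ tau T ≤ T)
    (htau : Tendsto (fun T : ℝ => tau T / T) atTop (nhds sc)) :
    Tendsto (fun T : ℝ =>
        (1 / T) * ∫ t in (0:ℝ)..T,
          w' (t / T) * ((1 / T) * ∫ τ in tau T..t, η τ) * J t)
      atTop (nhds (-(∫ s in (0:ℝ)..1, w s) * Lη * LJ)) :=
  windowed_dilation_average_eq_neg_mean_mul_averages_general η J w w' tau Lη LJ sc hηloc hη hJb
    hJloc hJ hw hw'c hw0 hw1 htau0 htau
end

section
/- Let η : ℝ → ℝ be continuous and bounded with ergodic average ⟨η⟩ existing, and let J : ℝ → ℝ be bounded and continuously differentiable such that the ergodic averages ⟨J⟩ and ⟨η·J⟩ exist. Let w : [0,1] → ℝ be continuously differentiable with w(0) = w(1) = 0 and mean w̄ = ∫₀¹ w(s) ds, and let τ̌ : (0,∞) → ℝ satisfy 0 ≤ τ̌(T) ≤ T for all T and lim_{T→∞} τ̌(T)/T exists. Then lim_{T→∞} −(1/T)∫₀ᵀ w(t/T) · (∫_{τ̌(T)}^{t} η(τ) dτ) · J'(t) dt = w̄·⟨η·J⟩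 − w̄·⟨η⟩·⟨J⟩. -/
/-!
Substituting `t = T s` and integrating by parts (the boundary terms vanish because
`w 0 = w 1 = 0`) rewrites the quantity as
`∫₀¹ w(s) η(Ts) J(Ts) ds + ∫₀¹ w'(s) ((1/T) ∫_{τ̌(T)}^{Ts} η) J(Ts) ds`.
The first term is a windowed ergodic average and tends to `w̄ ⟨ηJ⟩`. In the second,
`(1/T) ∫_{τ̌(T)}^{Ts} η → (s - sc) ⟨η⟩` uniformly in `s ∈ [0,1]`, so it tends to
`⟨η⟩ ⟨J⟩ ∫₀¹ w'(s) (s - sc) ds = -w̄ ⟨η⟩ ⟨J⟩`.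

Windowed averages `∫₀¹ v(s) f(Ts) ds → (∫₀¹ v) ⟨f⟩` hold for `C¹` weights by one more
integration by parts against the uniformly convergent primitives `(1/T) ∫₀^{Ts} f`, and for
merely continuous weights, when `f` is bounded, by Weierstrass approximation.
-/

open MeasureTheory Filter Set intervalIntegral Topology

theorem tendsto_of_forall_approx_s5 {ι : Type*} {l : Filter ι} {x : ι → ℝ} {a : ℝ}
    (h : ∀ ε > 0, ∃ y : ι → ℝ, ∃ b, Tendsto y l (𝓝 b) ∧ (∀ᶠ i in l, |x i - y i| ≤ ε) ∧
      |b - a| ≤ ε) :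
    Tendsto x l (𝓝 a) := by
  refine Metric.tendsto_nhds.2 fun ε hε => ?_
  obtain ⟨y, b, hy, hxy, hba⟩ := h (ε / 4) (by positivity)
  filter_upwards [hxy, Metric.tendsto_nhds.1 hy (ε / 4) (by positivity)] with i hxyi hyi
  rw [Real.dist_eq] at hyi ⊢
  have := abs_sub_le (x i) (y i) a
  have := abs_sub_le (y i) b a
  linarith

theorem TendstoUniformlyOn.mul_left_of_norm_le {ι α R : Type*} [SeminormedRing R]
    {l : Filter ι} {S : Set α} {F : ι → α → R} {f g : α → R} {C : ℝ}
    (hF : TendstoUniformlyOn F f l S) (hg : ∀ x ∈ S, ‖g x‖ ≤ C) :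
    TendstoUniformlyOn (fun i x => g x * F i x) (fun x => g x * f x) l S := by
  rw [Metric.tendstoUniformlyOn_iff] at hF ⊢
  intro ε hε
  have hC : 0 < |C| + 1 := by positivity
  filter_upwards [hF (ε / (|C| + 1)) (by positivity)] with i hi x hx
  rw [dist_eq_norm, ← mul_sub]
  calc ‖g x * (f x - F i x)‖ ≤ ‖g x‖ * ‖f x - F i x‖ := norm_mul_le _ _
    _ ≤ |C| * (ε / (|C| + 1)) := by
        rw [← dist_eq_norm]
        exact mul_le_mul ((hg x hx).trans (le_abs_self C)) (hi x hx).le dist_nonneg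
          (abs_nonneg C)
    _ < ε := by
        rw [mul_div_assoc', div_lt_iff₀ hC]
        nlinarith

theorem abs_integral_sub_integral_le {g h : ℝ → ℝ} {C : ℝ}
    (hg : IntervalIntegrable g volume 0 1) (hh : IntervalIntegrable h volume 0 1)
    (hgh : ∀ s ∈ Icc (0 : ℝ) 1, |g s - h s| ≤ C) :
    |(∫ s in (0 : ℝ)..1, g s) - ∫ s in (0 : ℝ)..1, h s| ≤ C := by
  rw [← intervalIntegral.integral_sub hg hh]
  simpa using norm_integral_le_of_norm_le_const (a := 0) (b := 1) (C := C)
    (f := fun s => g s - h s) fun s hs => hgh s (Ioc_subset_Icc_self (by simpa using hs))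

theorem one_div_mul_integral_eq_integral_comp_mul (g : ℝ → ℝ) {T : ℝ} (hT : T ≠ 0) :
    (1 / T) * ∫ t in (0 : ℝ)..T, g t = ∫ s in (0 : ℝ)..1, g (T * s) := by
  rw [integral_comp_mul_left g hT]
  simp

theorem hasDerivAt_comp_mul_div {E : ℝ → ℝ} {e T s : ℝ} (hE : HasDerivAt E e (T * s))
    (hT : T ≠ 0) : HasDerivAt (fun s => E (T * s) / T) e s := by
  have := (hE.comp s ((hasDerivAt_id s).const_mul T)).div_const T
  simpa [hT] using this

theorem tendstoUniformlyOn_primitive_div {f : ℝ → ℝ} {L : ℝ} (hf : Continuous f)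
    (hL : Tendsto (fun T : ℝ => (1 / T) * ∫ t in (0 : ℝ)..T, f t) atTop (𝓝 L)) :
    TendstoUniformlyOn (fun T s => (∫ t in (0 : ℝ)..T * s, f t) / T) (fun s => s * L) atTop
      (Icc 0 1) := by
  rw [Metric.tendstoUniformlyOn_iff]
  intro ε hε
  obtain ⟨N, hN⟩ := Metric.tendsto_atTop.1 hL ε hε
  have hG : Continuous fun u => (∫ t in (0 : ℝ)..u, f t) - u * L :=
    (continuous_primitive hf.intervalIntegrable 0).sub (by fun_prop)
  obtain ⟨C, hC⟩ := (isCompact_Icc (a := 0) (b := max N 1)).exists_bound_of_continuousOn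
    hG.continuousOn
  filter_upwards [eventually_gt_atTop (C / ε), eventually_gt_atTop 0] with T hTC hT s ⟨hs0, hs1⟩
  rw [Real.dist_eq]
  rcases le_or_gt (T * s) (max N 1) with hTs | hTs
  · have hbound := hC (T * s) ⟨by positivity, hTs⟩
    rw [Real.norm_eq_abs] at hbound
    calc |s * L - (∫ t in (0 : ℝ)..T * s, f t) / T|
        = |(∫ t in (0 : ℝ)..T * s, f t) - T * s * L| / T := by
          rw [abs_sub_comm, ← abs_of_pos hT, ← abs_div, abs_of_pos hT]
          congr 1; field_simp
      _ ≤ C / T := by gcongr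
      _ < ε := by rwa [div_lt_iff₀ hT, ← div_lt_iff₀' hε]
  · have hs : 0 < s := pos_of_mul_pos_right (hTs.trans' (lt_max_of_lt_right one_pos)) hT.le
    have hdist := hN (T * s) ((le_max_left N 1).trans hTs.le)
    rw [Real.dist_eq] at hdist
    calc |s * L - (∫ t in (0 : ℝ)..T * s, f t) / T|
        = s * |1 / (T * s) * (∫ t in (0 : ℝ)..T * s, f t) - L| := by
          rw [← abs_of_pos hs, ← abs_mul, abs_sub_comm, abs_of_pos hs]
          congr 1; field_simp
      _ ≤ |1 / (T * s) * (∫ t in (0 : ℝ)..T * s, f t) - L| :=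
          mul_le_of_le_one_left (abs_nonneg _) hs1
      _ < ε := hdist

theorem integral_deriv_mul_sub_eq {v v' : ℝ → ℝ} (c : ℝ)
    (hv : ∀ s ∈ Icc (0 : ℝ) 1, HasDerivWithinAt v (v' s) (Icc 0 1) s)
    (hv' : ContinuousOn v' (Icc 0 1)) :
    ∫ s in (0 : ℝ)..1, v' s * (s - c) = (1 - c) * v 1 + c * v 0 - ∫ s in (0 : ℝ)..1, v s := by
  rw [← uIcc_of_le zero_le_one] at hv hv'
  have hvc : ContinuousOn v (uIcc 0 1) := fun s hs => (hv s hs).continuousWithinAt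
  have ibp := integral_mul_deriv_eq_deriv_mul_of_hasDerivWithinAt (u := fun s => s - c)
    (u' := fun _ => 1) (fun s _ => ((hasDerivAt_id s).sub_const c).hasDerivWithinAt) hv
    intervalIntegrable_const (hv'.intervalIntegrable)
  simp only [one_mul] at ibp
  rw [integral_congr fun s _ => mul_comm (v' s) (s - c), ibp]
  ring

theorem tendsto_integral_mul_comp_mul_of_hasDerivWithinAt {f v v' : ℝ → ℝ} {L : ℝ}
    (hf : Continuous f)
    (hL : Tendsto (fun T : ℝ => (1 / T) * ∫ t in (0 : ℝ)..T, f t) atTop (𝓝 L))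
    (hv : ∀ s ∈ Icc (0 : ℝ) 1, HasDerivWithinAt v (v' s) (Icc 0 1) s)
    (hv' : ContinuousOn v' (Icc 0 1)) :
    Tendsto (fun T => ∫ s in (0 : ℝ)..1, v s * f (T * s)) atTop
      (𝓝 ((∫ s in (0 : ℝ)..1, v s) * L)) := by
  set Φ : ℝ → ℝ → ℝ := fun T s => (∫ t in (0 : ℝ)..T * s, f t) / T
  have hΦ : TendstoUniformlyOn Φ (fun s => s * L) atTop (Icc 0 1) :=
    tendstoUniformlyOn_primitive_div hf hL
  have hΦd : ∀ T ≠ 0, ∀ s, HasDerivAt (Φ T) (f (T * s)) s := fun T hT s =>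
    hasDerivAt_comp_mul_div ((hf.integral_hasStrictDerivAt 0 _).hasDerivAt) hT
  have hibp : ∀ T ≠ 0,
      ∫ s in (0 : ℝ)..1, v s * f (T * s) = v 1 * Φ T 1 - ∫ s in (0 : ℝ)..1, v' s * Φ T s := by
    intro T hT
    rw [← uIcc_of_le zero_le_one] at hv hv'
    rw [integral_mul_deriv_eq_deriv_mul_of_hasDerivWithinAt hv
      (fun s _ => (hΦd T hT s).hasDerivWithinAt) hv'.intervalIntegrable
      ((by fun_prop : Continuous fun s => f (T * s)).intervalIntegrable _ _)]
    simp [Φ]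
  obtain ⟨C, hC⟩ := isCompact_Icc.exists_bound_of_continuousOn hv'
  have hlim : Tendsto (fun T => ∫ s in (0 : ℝ)..1, v' s * Φ T s) atTop
      (𝓝 (∫ s in (0 : ℝ)..1, v' s * (s * L))) := by
    have hunif := hΦ.mul_left_of_norm_le hC
    rw [← uIcc_of_le zero_le_one] at hunif hv'
    refine hunif.tendsto_intervalIntegral_of_continuousOn (Eventually.of_forall fun T => ?_)
    exact hv'.mul (by fun_prop)
  have hvalue : v 1 * (1 * L) - ∫ s in (0 : ℝ)..1, v' s * (s * L)
      = (∫ s in (0 : ℝ)..1, v s) * L := by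
    simp_rw [← mul_assoc, intervalIntegral.integral_mul_const]
    have := integral_deriv_mul_sub_eq 0 hv hv'
    simp only [sub_zero] at this
    rw [this]
    ring
  rw [← hvalue]
  refine ((hΦ.tendsto_at (right_mem_Icc.2 zero_le_one)).const_mul (v 1) |>.sub hlim).congr' ?_
  filter_upwards [eventually_ne_atTop 0] with T hT
  exact (hibp T hT).symm

theorem tendsto_integral_mul_comp_mul_of_tendstoUniformlyOn {f v : ℝ → ℝ} {u : ℝ → ℝ → ℝ}
    {B L : ℝ} (hf : Continuous f) (hfB : ∀ t, |f t| ≤ B)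
    (hL : Tendsto (fun T : ℝ => (1 / T) * ∫ t in (0 : ℝ)..T, f t) atTop (𝓝 L))
    (hu : ∀ T, ContinuousOn (u T) (Icc 0 1)) (huv : TendstoUniformlyOn u v atTop (Icc 0 1)) :
    Tendsto (fun T => ∫ s in (0 : ℝ)..1, u T s * f (T * s)) atTop
      (𝓝 ((∫ s in (0 : ℝ)..1, v s) * L)) := by
  have hv : ContinuousOn v (Icc 0 1) := huv.continuousOn (Frequently.of_forall hu)
  have hB : 0 ≤ B := (abs_nonneg _).trans (hfB 0)
  refine tendsto_of_forall_approx_s5 fun ε hε => ?_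
  set δ := ε / (2 * B + |L| + 1)
  have hδ : 0 < δ := by positivity
  have hδB : 2 * δ * B ≤ ε := by
    rw [mul_comm 2, mul_assoc, div_mul_eq_mul_div, div_le_iff₀ (by positivity)]
    nlinarith [abs_nonneg L]
  have hδL : δ * |L| ≤ ε := by
    rw [div_mul_eq_mul_div, div_le_iff₀ (by positivity)]
    nlinarith [abs_nonneg L]
  obtain ⟨p, hp⟩ := exists_polynomial_near_of_continuousOn 0 1 v hv δ hδ
  rw [← uIcc_of_le zero_le_one] at hu hv
  refine ⟨fun T => ∫ s in (0 : ℝ)..1, p.eval s * f (T * s), (∫ s in (0 : ℝ)..1, p.eval s) * L,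
    tendsto_integral_mul_comp_mul_of_hasDerivWithinAt hf hL
      (fun s _ => (p.hasDerivAt s).hasDerivWithinAt) p.derivative.continuous.continuousOn,
    ?_, ?_⟩
  · filter_upwards [Metric.tendstoUniformlyOn_iff.1 huv δ hδ] with T hT
    have hcont : ContinuousOn (fun s => u T s * f (T * s)) (uIcc 0 1) := (hu T).mul (by fun_prop)
    refine abs_integral_sub_integral_le hcont.intervalIntegrable
      ((by fun_prop : Continuous fun s => p.eval s * f (T * s)).intervalIntegrable _ _)
      fun s hs => ?_
    rw [← sub_mul, abs_mul]
    refine le_trans (mul_le_mul ?_ (hfB _) (abs_nonneg _) (by positivity)) hδB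
    have huv_s : |u T s - v s| < δ := by rw [← Real.dist_eq, dist_comm]; exact hT s hs
    have := abs_sub_le (u T s) (v s) (p.eval s)
    rw [abs_sub_comm (v s)] at this
    linarith [hp s hs]
  · rw [← sub_mul, abs_mul]
    refine le_trans (mul_le_mul_of_nonneg_right ?_ (abs_nonneg L)) hδL
    exact abs_integral_sub_integral_le (p.continuous.intervalIntegrable _ _)
      hv.intervalIntegrable fun s hs => (hp s hs).le

theorem neg_average_window_mul_deriv_eq {w w' E e J J' : ℝ → ℝ} {T : ℝ} (hT : T ≠ 0)
    (hw : ∀ s ∈ Icc (0 : ℝ) 1, HasDerivWithinAt w (w' s) (Icc 0 1) s)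
    (hw' : ContinuousOn w' (Icc 0 1)) (hw0 : w 0 = 0) (hw1 : w 1 = 0)
    (hE : ∀ t, HasDerivAt E (e t) t) (he : Continuous e)
    (hJ : ∀ t, HasDerivAt J (J' t) t) (hJ' : Continuous J') :
    -((1 / T) * ∫ t in (0 : ℝ)..T, w (t / T) * E t * J' t)
      = (∫ s in (0 : ℝ)..1, w s * (e (T * s) * J (T * s)))
        + ∫ s in (0 : ℝ)..1, w' s * (E (T * s) / T) * J (T * s) := by
  rw [← uIcc_of_le zero_le_one] at hw hw'
  have hwc : ContinuousOn w (uIcc 0 1) := fun s hs => (hw s hs).continuousWithinAt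
  have hEc : Continuous E := continuous_iff_continuousAt.2 fun t => (hE t).continuousAt
  have hJc : Continuous J := continuous_iff_continuousAt.2 fun t => (hJ t).continuousAt
  have hU : ∀ s ∈ uIcc (0 : ℝ) 1, HasDerivWithinAt (fun s => w s * (E (T * s) / T))
      (w' s * (E (T * s) / T) + w s * e (T * s)) (uIcc 0 1) s := fun s hs =>
    (hw s hs).mul (hasDerivAt_comp_mul_div (hE _) hT).hasDerivWithinAt
  have hV : ∀ s, HasDerivAt (fun s => J (T * s)) (J' (T * s) * T) s := fun s => by
    simpa [Function.comp_def] using (hJ (T * s)).comp s ((hasDerivAt_id s).const_mul T)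
  have hU'c : ContinuousOn (fun s => w' s * (E (T * s) / T) + w s * e (T * s)) (uIcc 0 1) :=
    (hw'.mul (by fun_prop)).add (hwc.mul (by fun_prop))
  have ibp := integral_mul_deriv_eq_deriv_mul_of_hasDerivWithinAt hU
    (fun s _ => (hV s).hasDerivWithinAt) hU'c.intervalIntegrable
    ((by fun_prop : Continuous fun s => J' (T * s) * T).intervalIntegrable _ _)
  simp only [hw0, hw1, zero_mul, sub_zero, zero_sub] at ibp
  have hlhs : ∫ s in (0 : ℝ)..1, w (T * s / T) * E (T * s) * J' (T * s)
      = ∫ s in (0 : ℝ)..1, w s * (E (T * s) / T) * (J' (T * s) * T) :=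
    integral_congr fun s _ => by field_simp
  have hi1 : ContinuousOn (fun s => w s * (e (T * s) * J (T * s))) (uIcc 0 1) :=
    hwc.mul (by fun_prop)
  have hi2 : ContinuousOn (fun s => w' s * (E (T * s) / T) * J (T * s)) (uIcc 0 1) :=
    (hw'.mul (by fun_prop)).mul (by fun_prop)
  rw [one_div_mul_integral_eq_integral_comp_mul _ hT, hlhs, ibp, neg_neg,
    ← intervalIntegral.integral_add hi1.intervalIntegrable hi2.intervalIntegrable]
  exact integral_congr fun s _ => by ring

theorem tendstoUniformlyOn_intervalIntegral_div {f a : ℝ → ℝ} {L c : ℝ} (hf : Continuous f)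
    (hL : Tendsto (fun T : ℝ => (1 / T) * ∫ t in (0 : ℝ)..T, f t) atTop (𝓝 L))
    (ha : ∀ T : ℝ, 0 < T → 0 ≤ a T ∧ a T ≤ T) (hac : Tendsto (fun T : ℝ => a T / T) atTop (𝓝 c)) :
    TendstoUniformlyOn (fun T s => (∫ t in a T..T * s, f t) / T) (fun s => s * L - c * L) atTop
      (Icc 0 1) := by
  have hΦ := tendstoUniformlyOn_primitive_div hf hL
  have ha' : Tendsto (fun T => (∫ t in (0 : ℝ)..T * (a T / T), f t) / T) atTop (𝓝 (c * L)) := by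
    refine hΦ.tendsto_comp (by fun_prop) (tendsto_nhdsWithin_iff.2 ⟨hac, ?_⟩)
    filter_upwards [eventually_gt_atTop 0] with T hT
    obtain ⟨h0, hT'⟩ := ha T hT
    exact ⟨div_nonneg h0 hT.le, div_le_one_of_le₀ hT' hT.le⟩
  refine (hΦ.sub (ha'.tendstoUniformlyOn_const _)).congr ?_
  filter_upwards [eventually_ne_atTop 0] with T hT s _
  simp only [Pi.sub_apply]
  rw [mul_div_cancel₀ _ hT, ← sub_div, integral_interval_sub_left (hf.intervalIntegrable _ _)
    (hf.intervalIntegrable _ _)]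

theorem windowed_dilated_derivative_average_general
    (η J J' w w' : ℝ → ℝ) (tau : ℝ → ℝ) (Lη LJ LηJ sc : ℝ)
    (hηc : Continuous η)
    (hη : Tendsto (fun T : ℝ => (1 / T) * ∫ t in (0:ℝ)..T, η t) atTop (nhds Lη))
    (hJb : ∃ B : ℝ, ∀ t : ℝ, |J t| ≤ B)
    (hJd : ∀ t : ℝ, HasDerivAt J (J' t) t)
    (hJ'c : Continuous J')
    (hJ : Tendsto (fun T : ℝ => (1 / T) * ∫ t in (0:ℝ)..T, J t) atTop (nhds LJ))
    (hηJ : Tendsto (fun T : ℝ => (1 / T) * ∫ t in (0:ℝ)..T, η t * J t) atTop (nhds LηJ))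
    (hw : ∀ s ∈ Icc (0:ℝ) 1, HasDerivWithinAt w (w' s) (Icc (0:ℝ) 1) s)
    (hw'c : ContinuousOn w' (Icc (0:ℝ) 1))
    (hw0 : w 0 = 0) (hw1 : w 1 = 0)
    (htau0 : ∀ T : ℝ, 0 < T → 0 ≤ tau T ∧ tau T ≤ T)
    (htau : Tendsto (fun T : ℝ => tau T / T) atTop (nhds sc)) :
    Tendsto (fun T : ℝ =>
        -((1 / T) * ∫ t in (0:ℝ)..T, w (t / T) * (∫ τ in tau T..t, η τ) * J' t))
      atTop
      (nhds ((∫ s in (0:ℝ)..1, w s) * LηJ - (∫ s in (0:ℝ)..1, w s) * Lη * LJ)) := by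
  obtain ⟨B, hJB⟩ := hJb
  have hJc : Continuous J := continuous_iff_continuousAt.2 fun t => (hJd t).continuousAt
  obtain ⟨C, hC⟩ := isCompact_Icc.exists_bound_of_continuousOn hw'c
  have hweight := (tendstoUniformlyOn_intervalIntegral_div hηc hη htau0 htau).mul_left_of_norm_le hC
  have hlim := (tendsto_integral_mul_comp_mul_of_hasDerivWithinAt (f := fun t => η t * J t)
    (hηc.mul hJc) hηJ hw hw'c).add
    (tendsto_integral_mul_comp_mul_of_tendstoUniformlyOn hJc hJB hJ
      (fun T => hw'c.mul (by fun_prop)) hweight)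
  have hvalue : ∫ s in (0 : ℝ)..1, w' s * (s * Lη - sc * Lη) = -(∫ s in (0 : ℝ)..1, w s) * Lη := by
    simp_rw [← sub_mul, ← mul_assoc, intervalIntegral.integral_mul_const,
      integral_deriv_mul_sub_eq sc hw hw'c, hw0, hw1]
    ring
  rw [hvalue] at hlim
  convert hlim.congr' ?_ using 2
  · ring
  filter_upwards [eventually_ne_atTop 0] with T hT
  exact (neg_average_window_mul_deriv_eq hT hw hw'c hw0 hw1
    (fun t => (hηc.integral_hasStrictDerivAt (tau T) t).hasDerivAt) hηc hJd hJ'c).symm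

/-- Combination of Equations (14) and (15): for `η` continuous and bounded with
ergodic average `⟨η⟩ = Lη`, `J` bounded and continuously differentiable (with
derivative `J'`) such that `⟨J⟩ = LJ` and `⟨η·J⟩ = LηJ` exist, `w` continuously
differentiable on `[0,1]` with `w 0 = w 1 = 0` and mean `w̄ = ∫₀¹ w`, and
`tau : (0,∞) → ℝ` with `0 ≤ tau T ≤ T` and `lim_{T→∞} tau T / T` existing:
`lim_{T→∞} −(1/T)∫₀ᵀ w(t/T)·(∫_{tau T}^t η)·J'(t) dt = w̄·⟨ηJ⟩ − w̄·⟨η⟩·⟨J⟩`. -/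
theorem windowed_dilated_derivative_average
    (η J J' w w' : ℝ → ℝ) (tau : ℝ → ℝ) (Lη LJ LηJ sc : ℝ)
    (hηc : Continuous η)
    (hηb : ∃ B : ℝ, ∀ t : ℝ, |η t| ≤ B)
    (hη : Tendsto (fun T : ℝ => (1 / T) * ∫ t in (0:ℝ)..T, η t) atTop (nhds Lη))
    (hJb : ∃ B : ℝ, ∀ t : ℝ, |J t| ≤ B)
    (hJd : ∀ t : ℝ, HasDerivAt J (J' t) t)
    (hJ'c : Continuous J')
    (hJ : Tendsto (fun T : ℝ => (1 / T) * ∫ t in (0:ℝ)..T, J t) atTop (nhds LJ))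
    (hηJ : Tendsto (fun T : ℝ => (1 / T) * ∫ t in (0:ℝ)..T, η t * J t) atTop (nhds LηJ))
    (hw : ∀ s ∈ Icc (0:ℝ) 1, HasDerivWithinAt w (w' s) (Icc (0:ℝ) 1) s)
    (hw'c : ContinuousOn w' (Icc (0:ℝ) 1))
    (hw0 : w 0 = 0) (hw1 : w 1 = 0)
    (htau0 : ∀ T : ℝ, 0 < T → 0 ≤ tau T ∧ tau T ≤ T)
    (htau : Tendsto (fun T : ℝ => tau T / T) atTop (nhds sc)) :
    Tendsto (fun T : ℝ =>
        -((1 / T) * ∫ t in (0:ℝ)..T, w (t / T) * (∫ τ in tau T..t, η τ) * J' t))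
      atTop
      (nhds ((∫ s in (0:ℝ)..1, w s) * LηJ - (∫ s in (0:ℝ)..1, w s) * Lη * LJ)) :=
  windowed_dilated_derivative_average_general η J J' w w' tau Lη LJ LηJ sc hηc hη hJb hJd hJ'c hJ
    hηJ hw hw'c hw0 hw1 htau0 htau
end

section
/- Let f : ℝⁿ → ℝⁿ be continuously differentiable, let u : ℝ → ℝⁿ be differentiable with u'(t) = f(u(t)) for all t, let g : ℝ → ℝⁿ and η : ℝ → ℝ be continuous, and let v : ℝ → ℝⁿ be differentiable and satisfy the time-dilated linearized equation v'(t) = Df(u(t))·v(t) + g(t) + η(t)·f(u(t)) for all t, where Df(u(t)) is the Jacobian (Fréchet derivative) of f at u(t). Fix τ̌ ∈ ℝ and define v̌(t) = v(t) − f(u(t))·∫_{τ̌}^{t} η(τ) dτ. Then v̌ is differentiable and satisfies the non-dilated linearized equation v̌'(t) = Df(u(t))·v̌(t) + g(t) for all t. -/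
open MeasureTheory Filter Set

/-! Along a trajectory of `u' = f(u)` the vector field `f(u(t))` itself solves the linearized
equation `w' = Df(u)·w`. Hence subtracting `(∫ η) • f(u)` from `v` removes the source `η • f(u)`
(by the product rule) without changing the linear part. -/

theorem hasDerivAt_vectorField_along_solution {E : Type*} [NormedAddCommGroup E]
    [NormedSpace ℝ E] {f : E → E} {u : ℝ → E} {t : ℝ} (hf : DifferentiableAt ℝ f (u t))
    (hu : HasDerivAt u (f (u t)) t) :
    HasDerivAt (fun s => f (u s)) (fderiv ℝ f (u t) (f (u t))) t :=
  hf.hasFDerivAt.comp_hasDerivAt t hu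

theorem HasDerivAt.sub_smul_cancel_source {E : Type*} [NormedAddCommGroup E]
    [NormedSpace ℝ E] {A : E →L[ℝ] E} {v w : ℝ → E} {φ : ℝ → ℝ} {φ' t : ℝ} {b : E}
    (hv : HasDerivAt v (A (v t) + b + φ' • w t) t) (hw : HasDerivAt w (A (w t)) t)
    (hφ : HasDerivAt φ φ' t) :
    HasDerivAt (fun s => v s - φ s • w s) (A (v t - φ t • w t) + b) t := by
  refine (hv.sub (hφ.smul hw)).congr_deriv ?_
  rw [map_sub, map_smul]
  abel

theorem shifted_tangent_solves_nondilated_equation_general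
    {n : ℕ} (f : EuclideanSpace ℝ (Fin n) → EuclideanSpace ℝ (Fin n))
    (u v g : ℝ → EuclideanSpace ℝ (Fin n)) (η : ℝ → ℝ) (tau : ℝ)
    (hf : ContDiff ℝ 1 f)
    (hu : ∀ t : ℝ, HasDerivAt u (f (u t)) t)
    (hη : Continuous η)
    (hv : ∀ t : ℝ, HasDerivAt v (fderiv ℝ f (u t) (v t) + g t + η t • f (u t)) t) :
    ∀ t : ℝ,
      HasDerivAt (fun s : ℝ => v s - (∫ τ in tau..s, η τ) • f (u s))
        (fderiv ℝ f (u t) (v t - (∫ τ in tau..t, η τ) • f (u t)) + g t) t := by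
  intro t
  have hfu := hasDerivAt_vectorField_along_solution (hf.differentiable one_ne_zero (u t)) (hu t)
  have hI : HasDerivAt (fun s => ∫ τ in tau..s, η τ) (η t) t :=
    intervalIntegral.integral_hasDerivAt_right (hη.intervalIntegrable _ _)
      (hη.stronglyMeasurableAtFilter _ _) hη.continuousAt
  exact (hv t).sub_smul_cancel_source hfu hI

/-- Removing the time dilation term: if `u` solves `u' = f(u)`, and `v` solves the
time-dilated linearized equation `v' = Df(u)·v + g + η·f(u)`, then
`v̌(t) = v(t) − (∫_tau^t η) • f(u(t))` solves the non-dilated linearized equation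
`v̌' = Df(u)·v̌ + g`. -/
theorem shifted_tangent_solves_nondilated_equation
    {n : ℕ} (f : EuclideanSpace ℝ (Fin n) → EuclideanSpace ℝ (Fin n))
    (u v g : ℝ → EuclideanSpace ℝ (Fin n)) (η : ℝ → ℝ) (tau : ℝ)
    (hf : ContDiff ℝ 1 f)
    (hu : ∀ t : ℝ, HasDerivAt u (f (u t)) t)
    (hg : Continuous g) (hη : Continuous η)
    (hv : ∀ t : ℝ, HasDerivAt v (fderiv ℝ f (u t) (v t) + g t + η t • f (u t)) t) :
    ∀ t : ℝ,
      HasDerivAt (fun s : ℝ => v s - (∫ τ in tau..s, η τ) • f (u s))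
        (fderiv ℝ f (u t) (v t - (∫ τ in tau..t, η τ) • f (u t)) + g t) t :=
  shifted_tangent_solves_nondilated_equation_general f u v g η tau hf hu hη hv
end
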